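/- arXiv:math/0504501 — 2 statements merged into one kernel-verified Lean document; each statement's English description precedes it below -/
import Mathlib

section
/- Let X ~ N(θ,1) and let s_λ(x) = sgn(x)(|x| - λ)⁺ be the soft threshold function with λ > 0. Then the risk R_s(θ;λ) = E_θ(s_λ(X) - θ)² is nondecreasing in |θ|. -/
open MeasureTheory Real

/-- Standard normal density. -/
noncomputable def gaussPDF (x : ℝ) : ℝ := (Real.sqrt (2 * Real.pi))⁻¹ * Real.exp (-x ^ 2 / 2)

/-- Soft threshold function `s_λ(x) = sgn(x)(|x|-λ)⁺`. -/
noncomputable def softThresh (lam x : ℝ) : ℝ := Real.sign x * max (|x| - lam) 0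

/-- Risk of the soft threshold estimator at mean `θ`, unit variance. -/
noncomputable def softRisk (lam θ : ℝ) : ℝ :=
  ∫ x, (softThresh lam x - θ) ^ 2 * gaussPDF (x - θ)

lemma softThresh_eq (lam : ℝ) (hlam : 0 < lam) (x : ℝ) :
    softThresh lam x = x - max (min x lam) (-lam) := by
  unfold softThresh
  rcases lt_trichotomy x 0 with hx | hx | hx
  · rw [Real.sign_of_neg hx, abs_of_neg hx]
    rcases le_total x (-lam) with h | h
    · rw [max_eq_left (by linarith), min_eq_left (by linarith), max_eq_right h]; ring
    · rw [max_eq_right (by linarith), min_eq_left (by linarith), max_eq_left h]; ring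
  · simp [hx]; rw [min_eq_left hlam.le, max_eq_left (by linarith)]
  · rw [Real.sign_of_pos hx, abs_of_pos hx]
    rcases le_total x lam with h | h
    · rw [max_eq_right (by linarith), min_eq_left h, max_eq_left (by linarith)]; ring
    · rw [max_eq_left (by linarith), min_eq_right h, max_eq_left (by linarith)]; ring

lemma softThresh_neg (lam x : ℝ) : softThresh lam (-x) = -softThresh lam x := by
  unfold softThresh
  rw [Real.sign_neg, abs_neg]; ring

lemma softThresh_abs_le (lam x : ℝ) (hlam : 0 < lam) : |softThresh lam x| ≤ |x| := by
  unfold softThresh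
  rcases le_total (|x| - lam) 0 with h | h
  · rw [max_eq_right h]; simp [abs_nonneg]
  · rw [max_eq_left h, abs_mul, abs_of_nonneg h]
    calc |Real.sign x| * (|x| - lam) ≤ 1 * |x| := by
          apply mul_le_mul _ (by linarith) (by linarith) zero_le_one
          rcases lt_trichotomy x 0 with hx | hx | hx <;>
            simp [Real.sign_of_neg, Real.sign_of_pos, hx]
      _ = |x| := one_mul _

lemma key (lam z θ₁ θ₂ : ℝ) (hlam : 0 < lam) (h0 : 0 ≤ θ₁) (h12 : θ₁ ≤ θ₂) :
    (z - max (min (θ₁ + z) lam) (-lam)) ^ 2 ≤ (z - max (min (θ₂ + z) lam) (-lam)) ^ 2 := by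
  rcases le_total (θ₁ + z) lam with h1 | h1 <;>
  rcases le_total (θ₂ + z) lam with h2 | h2 <;>
  rcases le_total (θ₁ + z) (-lam) with h3 | h3 <;>
  rcases le_total (θ₂ + z) (-lam) with h4 | h4 <;>
  simp only [min_eq_left, min_eq_right, max_eq_left, max_eq_right, h1, h2, h3, h4,
    min_def, max_def] <;> (try rw [if_neg (show ¬ lam ≤ -lam by linarith)]) <;> nlinarith

lemma gaussPDF_nonneg (x : ℝ) : 0 ≤ gaussPDF x := by
  unfold gaussPDF
  positivity

lemma gaussPDF_cont : Continuous gaussPDF := by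
  unfold gaussPDF; fun_prop

lemma integ (lam θ : ℝ) (hlam : 0 < lam) :
    Integrable (fun z => (softThresh lam (z + θ) - θ) ^ 2 * gaussPDF z) := by
  have hmaj : Integrable (fun z : ℝ => (2 * z ^ 2 + 2 * (2 * |θ|) ^ 2) * gaussPDF z) := by
    have h2 : Integrable (fun z : ℝ => z ^ 2 * Real.exp (-(1/2) * z ^ 2)) := by
      have := integrable_rpow_mul_exp_neg_mul_sq (b := 1/2) (by norm_num) (s := 2) (by norm_num)
      simpa [Real.rpow_two] using this
    have h0 : Integrable (fun z : ℝ => Real.exp (-(1/2) * z ^ 2)) :=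
      integrable_exp_neg_mul_sq (by norm_num)
    have : Integrable (fun z : ℝ =>
        (2 * (z ^ 2 * Real.exp (-(1/2) * z ^ 2)) + (2 * (2 * |θ|) ^ 2) *
          Real.exp (-(1/2) * z ^ 2))) := ((h2.const_mul 2).add (h0.const_mul _))
    apply (this.const_mul ((Real.sqrt (2 * Real.pi))⁻¹)).congr
    filter_upwards with z
    unfold gaussPDF
    ring_nf
  have hcont : Continuous (fun z => (softThresh lam (z + θ) - θ) ^ 2 * gaussPDF z) := by
    have : (fun z => (softThresh lam (z + θ) - θ) ^ 2 * gaussPDF z)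
        = fun z => ((z + θ) - max (min (z + θ) lam) (-lam) - θ) ^ 2 * gaussPDF z := by
      funext z; rw [softThresh_eq lam hlam]
    rw [this]
    have := gaussPDF_cont
    fun_prop
  apply hmaj.mono' hcont.aestronglyMeasurable
  filter_upwards with z
  rw [Real.norm_eq_abs, abs_mul, abs_of_nonneg (gaussPDF_nonneg z)]
  apply mul_le_mul_of_nonneg_right _ (gaussPDF_nonneg z)
  rw [abs_of_nonneg (sq_nonneg _)]
  have h1 : |softThresh lam (z + θ) - θ| ≤ |z| + 2 * |θ| := by
    calc |softThresh lam (z + θ) - θ| ≤ |softThresh lam (z + θ)| + |θ| := abs_sub _ _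
      _ ≤ |z + θ| + |θ| := by linarith [softThresh_abs_le lam (z + θ) hlam]
      _ ≤ |z| + 2 * |θ| := by linarith [abs_add_le z θ]
  have h2 : (softThresh lam (z + θ) - θ) ^ 2 ≤ (|z| + 2 * |θ|) ^ 2 := by
    rw [← sq_abs]
    exact pow_le_pow_left₀ (abs_nonneg _) h1 2
  nlinarith [abs_nonneg z, abs_nonneg θ, sq_abs z, sq_nonneg (|z| - 2 * |θ|)]

lemma centered (lam θ : ℝ) :
    softRisk lam θ = ∫ z, (softThresh lam (z + θ) - θ) ^ 2 * gaussPDF z := by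
  unfold softRisk
  rw [← integral_add_right_eq_self (fun x => (softThresh lam x - θ) ^ 2 * gaussPDF (x - θ)) θ]
  simp only [add_sub_cancel_right]

lemma softRisk_neg (lam θ : ℝ) : softRisk lam (-θ) = softRisk lam θ := by
  rw [centered, centered]
  rw [← integral_neg_eq_self (fun z => (softThresh lam (z + θ) - θ) ^ 2 * gaussPDF z) volume]
  congr 1; funext z
  have h1 : -z + θ = -(z - θ) := by ring
  have h2 : z + -θ = z - θ := by ring
  rw [h1, h2, softThresh_neg]
  have h3 : gaussPDF (-z) = gaussPDF z := by unfold gaussPDF; rw [neg_pow]; norm_num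
  rw [h3]; ring_nf

lemma mono_nonneg (lam a b : ℝ) (hlam : 0 < lam) (ha : 0 ≤ a) (hab : a ≤ b) :
    softRisk lam a ≤ softRisk lam b := by
  rw [centered, centered]
  apply integral_mono (integ lam a hlam) (integ lam b hlam)
  intro z
  simp only
  rw [softThresh_eq lam hlam, softThresh_eq lam hlam]
  apply mul_le_mul_of_nonneg_right _ (gaussPDF_nonneg z)
  have h := key lam z a b hlam ha hab
  have e1 : z + a - max (min (z + a) lam) (-lam) - a = z - max (min (a + z) lam) (-lam) := by
    rw [add_comm a z]; ring
  have e2 : z + b - max (min (z + b) lam) (-lam) - b = z - max (min (b + z) lam) (-lam) := by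
    rw [add_comm b z]; ring
  rw [e1, e2]; exact h

theorem stmt_6 (lam : ℝ) (hlam : 0 < lam) (θ₁ θ₂ : ℝ) (h : |θ₁| ≤ |θ₂|) :
    softRisk lam θ₁ ≤ softRisk lam θ₂ := by
  have e1 : softRisk lam θ₁ = softRisk lam |θ₁| := by
    rcases abs_cases θ₁ with ⟨h1, _⟩ | ⟨h1, _⟩
    · rw [h1]
    · rw [h1, softRisk_neg]
  have e2 : softRisk lam θ₂ = softRisk lam |θ₂| := by
    rcases abs_cases θ₂ with ⟨h1, _⟩ | ⟨h1, _⟩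
    · rw [h1]
    · rw [h1, softRisk_neg]
  rw [e1, e2]
  exact mono_nonneg lam _ _ hlam (abs_nonneg θ₁) h
end

section
/- For Z ~ N(0,1) and q ≥ 1/2, E|Z|^{2q} = Γ(q + 1/2)·2^q/√π ≤ √2·(2q/e)^q. -/
open MeasureTheory Real Filter

lemma log_avg_le (q : ℝ) (hq : 0 < q) :
    (q+1) * Real.log (q+1) - q * Real.log q - 1 ≤ Real.log (q + 1/2) := by

  have hc0 : (0:ℝ) < q + 1/2 := by linarith
  have key : (∫ t in q..(q+1), Real.log t) ≤
      ∫ t in q..(q+1), (Real.log (q+1/2) - 1 + t / (q+1/2)) := by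
    apply intervalIntegral.integral_mono_on (by linarith)
    · apply ContinuousOn.intervalIntegrable
      apply Real.continuousOn_log.mono
      intro x hx
      rw [Set.uIcc_of_le (by linarith : q ≤ q+1)] at hx
      simp only [Set.mem_compl_iff, Set.mem_singleton_iff]
      intro h; rw [h] at hx; linarith [hx.1]
    · apply Continuous.intervalIntegrable; continuity
    · intro x hx
      have hx0 : 0 < x := lt_of_lt_of_le hq hx.1
      have h2 := Real.log_le_sub_one_of_pos (div_pos hx0 hc0)
      rw [Real.log_div (ne_of_gt hx0) (ne_of_gt hc0)] at h2
      linarith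
  rw [integral_log] at key
  rw [intervalIntegral.integral_add intervalIntegrable_const
      ((intervalIntegral.intervalIntegrable_id).div_const _),
    intervalIntegral.integral_div, integral_id, intervalIntegral.integral_const] at key
  have : (q + 1 - q) • (Real.log (q+1/2) - 1) + ((q+1)^2 - q^2)/2 / (q+1/2)
      = Real.log (q+1/2) := by
    field_simp
    ring
  rw [this] at key
  linarith


noncomputable def gfun (q : ℝ) : ℝ := Real.Gamma (q + 1/2) * Real.exp q / q ^ q

lemma gfun_step (q : ℝ) (hq : 1/2 ≤ q) : gfun q ≤ gfun (q+1) := by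
  have hq0 : 0 < q := by linarith
  have hΓ : 0 < Real.Gamma (q + 1/2) := Real.Gamma_pos_of_pos (by linarith)
  have hG1 : Real.Gamma (q + 1 + 1/2) = (q + 1/2) * Real.Gamma (q + 1/2) := by
    rw [show q + 1 + 1/2 = (q + 1/2) + 1 by ring, Real.Gamma_add_one (by positivity)]
  have h1 : Real.exp q * (q+1) ^ (q+1) ≤ (q + 1/2) * Real.exp (q+1) * q ^ q := by
    have hlog := log_avg_le q hq0
    calc Real.exp q * (q+1) ^ (q+1)
        = Real.exp (Real.log (Real.exp q * (q+1) ^ (q+1))) := by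
          rw [Real.exp_log (by positivity)]
      _ ≤ Real.exp (Real.log ((q + 1/2) * Real.exp (q+1) * q ^ q)) := by
          apply Real.exp_le_exp.2
          rw [Real.log_mul (by positivity) (by positivity),
            Real.log_mul (by positivity) (by positivity),
            Real.log_mul (by positivity) (by positivity),
            Real.log_exp, Real.log_exp, Real.log_rpow hq0,
            Real.log_rpow (by linarith : (0:ℝ) < q+1)]
          linarith
      _ = (q + 1/2) * Real.exp (q+1) * q ^ q := by
          rw [Real.exp_log (by positivity)]
  rw [gfun, gfun, hG1, div_le_div_iff₀ (by positivity) (by positivity)]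
  calc Real.Gamma (q + 1/2) * Real.exp q * (q+1) ^ (q+1)
      = Real.Gamma (q + 1/2) * (Real.exp q * (q+1) ^ (q+1)) := by ring
    _ ≤ Real.Gamma (q + 1/2) * ((q + 1/2) * Real.exp (q+1) * q ^ q) := by
        exact mul_le_mul_of_nonneg_left h1 hΓ.le
    _ = (q + 1/2) * Real.Gamma (q + 1/2) * Real.exp (q+1) * q ^ q := by ring

lemma gfun_le (q : ℝ) (hq : 1/2 ≤ q) (n : ℕ) : gfun q ≤ gfun (q + n) := by
  induction n with
  | zero => simp
  | succ n ih =>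
      refine ih.trans ?_
      have := gfun_step (q + n) (by have : (0:ℝ) ≤ n := Nat.cast_nonneg n; linarith)
      push_cast
      rw [show q + ((n:ℝ)+1) = q + n + 1 by ring]
      exact this


lemma Gamma_nat_add_half (n : ℕ) :
    Real.Gamma ((n:ℝ) + 1/2) = Real.sqrt π * (2*n).factorial / (4^n * n.factorial) := by
  induction n with
  | zero => rw [show ((0:ℕ):ℝ) + 1/2 = 1/2 by norm_num, Real.Gamma_one_half_eq]; simp
  | succ n ih =>
      have h1 : ((n:ℝ)+1) + 1/2 = ((n:ℝ) + 1/2) + 1 := by ring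
      push_cast
      rw [h1, Real.Gamma_add_one (by positivity), ih]
      rw [show 2*(n+1) = (2*n+1)+1 by ring, Nat.factorial_succ, Nat.factorial_succ,
        Nat.factorial_succ]
      push_cast
      field_simp
      ring

lemma wendel {x s : ℝ} (hx : 0 < x) (hs0 : 0 ≤ s) (hs1 : s ≤ 1) :
    Real.Gamma (x + s) ≤ Real.Gamma x * x ^ s := by
  have h1 : (0:ℝ) < x + 1 := by linarith
  have hcv := Real.convexOn_log_Gamma.2 (Set.mem_Ioi.2 hx) (Set.mem_Ioi.2 h1)
    (by linarith : (0:ℝ) ≤ 1 - s) hs0 (by ring)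
  simp only [smul_eq_mul, Function.comp_apply] at hcv
  have heq : (1-s) * x + s * (x+1) = x + s := by ring
  rw [heq] at hcv
  have hΓx : 0 < Real.Gamma x := Real.Gamma_pos_of_pos hx
  have hΓxs : 0 < Real.Gamma (x + s) := Real.Gamma_pos_of_pos (by linarith)
  have hG1 : Real.Gamma (x + 1) = x * Real.Gamma x := Real.Gamma_add_one (ne_of_gt hx)
  calc Real.Gamma (x + s) = Real.exp (Real.log (Real.Gamma (x+s))) := by
        rw [Real.exp_log hΓxs]
    _ ≤ Real.exp (Real.log (Real.Gamma x) + s * Real.log x) := by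
        apply Real.exp_le_exp.2
        rw [hG1, Real.log_mul (ne_of_gt hx) (ne_of_gt hΓx)] at hcv
        nlinarith
    _ = Real.Gamma x * x ^ s := by
        rw [Real.exp_add, Real.exp_log hΓx, Real.rpow_def_of_pos hx, mul_comm s]


lemma factorial_eq_stirling (m : ℕ) (hm : 1 ≤ m) :
    (m.factorial : ℝ) = Stirling.stirlingSeq m * (Real.sqrt (2*m) * ((m:ℝ)/Real.exp 1)^m) := by
  have hd : Real.sqrt (2*(m:ℝ)) * ((m:ℝ)/Real.exp 1)^m ≠ 0 := by
    have hm0 : (0:ℝ) < m := by exact_mod_cast hm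
    positivity
  rw [Stirling.stirlingSeq, div_mul_cancel₀ _ hd]

lemma gamma_half_stirling (m : ℕ) (hm : 1 ≤ m) :
    Real.sqrt π * (2*m).factorial / (4^m * m.factorial) =
      Real.sqrt (2*π) * (Stirling.stirlingSeq (2*m) / Stirling.stirlingSeq m) *
        ((m:ℝ)/Real.exp 1)^m := by
  have hm0 : (0:ℝ) < m := by exact_mod_cast hm
  have h2m := factorial_eq_stirling (2*m) (by omega)
  have h1m := factorial_eq_stirling m hm
  have hsm : 0 < Stirling.stirlingSeq m := by
    obtain ⟨k, rfl⟩ : ∃ k, m = k + 1 := ⟨m - 1, by omega⟩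
    exact Stirling.stirlingSeq'_pos k
  have hs2m : 0 < Stirling.stirlingSeq (2*m) := by
    obtain ⟨k, hk⟩ : ∃ k, 2*m = k + 1 := ⟨2*m - 1, by omega⟩
    rw [hk]; exact Stirling.stirlingSeq'_pos k
  have hsqrt : Real.sqrt (2*((2*m:ℕ):ℝ)) = Real.sqrt 2 * Real.sqrt (2*(m:ℝ)) := by
    rw [← Real.sqrt_mul (by norm_num : (0:ℝ) ≤ 2)]
    push_cast
    ring_nf
  have hpow : (((2*m:ℕ):ℝ)/Real.exp 1)^(2*m) = 4^m * (((m:ℝ)/Real.exp 1)^m)^2 := by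
    push_cast
    rw [show (2*(m:ℝ))/Real.exp 1 = 2 * ((m:ℝ)/Real.exp 1) by ring, mul_pow,
      pow_mul, pow_mul]
    norm_num
    ring
  have hsq2 : Real.sqrt (2*π) = Real.sqrt 2 * Real.sqrt π :=
    Real.sqrt_mul (by norm_num) _
  rw [h2m, h1m, hsqrt, hpow, hsq2]
  have h1 : Real.sqrt (2*(m:ℝ)) ≠ 0 := by positivity
  have h2 : ((m:ℝ)/Real.exp 1)^m ≠ 0 := by positivity
  field_simp


lemma gamma_bound (q : ℝ) (hq : 1/2 ≤ q) :
    Real.Gamma (q + 1/2) * Real.exp q ≤ Real.sqrt (2*π) * q ^ q := by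
  have hq0 : 0 < q := by linarith
  set k := ⌊q⌋₊ with hk
  set s := q - k with hsdef
  have hs0 : 0 ≤ s := by
    have := Nat.floor_le hq0.le
    rw [hsdef]; linarith
  have hs1 : s < 1 := by
    have := Nat.lt_floor_add_one q
    rw [hsdef]; push_cast at this ⊢; linarith
  set E : ℕ → ℝ := fun n => Real.sqrt (2*π) *
      (Stirling.stirlingSeq (2*(k+n)) / Stirling.stirlingSeq (k+n)) * Real.exp s *
      ((((k+n:ℕ):ℝ)+1/2)/(((k+n:ℕ):ℝ)+s)) ^ s *
      ((1 + s/((k+n:ℕ):ℝ)) ^ (((k+n:ℕ):ℝ)))⁻¹ with hE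
  have key : ∀ n : ℕ, 1 ≤ k + n → gfun q ≤ E n := by
    intro n hm
    refine (gfun_le q hq n).trans ?_
    set m := k + n with hmdef
    set X : ℝ := ((m:ℕ):ℝ) with hX
    have hX1 : (1:ℝ) ≤ X := by rw [hX]; exact_mod_cast hm
    have hX0 : (0:ℝ) < X := by linarith
    have hXs : (0:ℝ) < X + s := by linarith
    have hqn : q + (n:ℝ) = X + s := by
      rw [hX, hmdef, hsdef]; push_cast; ring
    have h1 : Real.Gamma (X + s + 1/2) ≤
        Real.Gamma (X + 1/2) * (X + 1/2) ^ s := by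
      have := wendel (x := X + 1/2) (s := s) (by linarith) hs0 hs1.le
      rw [show X + 1/2 + s = X + s + 1/2 by ring] at this
      exact this
    have hGamma : Real.Gamma (X + 1/2) =
        Real.sqrt (2*π) * (Stirling.stirlingSeq (2*m) / Stirling.stirlingSeq m) *
          (X/Real.exp 1)^m := by
      rw [_root_.Gamma_nat_add_half m, gamma_half_stirling m hm]
    have hA : gfun (q + (n:ℝ)) ≤
        Real.Gamma (X + 1/2) * (X + 1/2) ^ s * Real.exp (X + s) / (X + s) ^ (X + s) := by
      rw [gfun, hqn]
      gcongr
    refine hA.trans (le_of_eq ?_)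
    rw [hGamma]
    have f1 : (X/Real.exp 1)^m = X ^ X / Real.exp X := by
      rw [← Real.rpow_natCast (X/Real.exp 1) m, ← hX, Real.div_rpow hX0.le (Real.exp_pos 1).le,
        Real.exp_one_rpow]
    have f2 : Real.exp (X + s) = Real.exp X * Real.exp s := Real.exp_add X s
    have f3 : (X + s) ^ (X + s) = (X + s) ^ X * (X + s) ^ s := Real.rpow_add hXs X s
    have f4 : (X/(X+s)) ^ X = X ^ X / (X+s) ^ X := Real.div_rpow hX0.le hXs.le X
    have f5 : ((X+1/2)/(X+s)) ^ s = (X+1/2) ^ s / (X+s) ^ s :=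
      Real.div_rpow (by linarith) hXs.le s
    have f6 : ((1 + s/X) ^ X)⁻¹ = (X/(X+s)) ^ X := by
      rw [show (1 + s/X) = ((X+s)/X) by field_simp, show X/(X+s) = ((X+s)/X)⁻¹ by
        rw [inv_div], Real.inv_rpow (by positivity)]
    have n3 : Real.exp X ≠ 0 := Real.exp_ne_zero X
    have f12 : (X / Real.exp 1)^m * Real.exp (X + s) = X ^ X * Real.exp s := by
      rw [f1, f2]
      field_simp
    rw [hE]
    simp only [← hmdef, ← hX]
    set r : ℝ := Stirling.stirlingSeq (2*m) / Stirling.stirlingSeq m with hr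
    calc Real.sqrt (2*π) * r * (X/Real.exp 1)^m * (X + 1/2) ^ s * Real.exp (X + s) /
          (X + s) ^ (X + s)
        = Real.sqrt (2*π) * r * ((X/Real.exp 1)^m * Real.exp (X + s)) *
            ((X + 1/2) ^ s / (X + s) ^ (X + s)) := by ring
      _ = Real.sqrt (2*π) * r * (X ^ X * Real.exp s) *
            ((X + 1/2) ^ s / ((X + s) ^ X * (X + s) ^ s)) := by rw [f12, f3]
      _ = Real.sqrt (2*π) * r * Real.exp s *
            (((X + 1/2) ^ s / (X + s) ^ s) * (X ^ X / (X + s) ^ X)) := by ring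
      _ = Real.sqrt (2*π) * r * Real.exp s * ((X + 1/2)/(X+s)) ^ s *
            ((1 + s/X) ^ X)⁻¹ := by rw [f6, f4, f5]; ring
  have hT0 : Tendsto (fun n : ℕ => k + n) atTop atTop := by
    apply StrictMono.tendsto_atTop
    intro a b h
    show k + a < k + b
    omega
  have hTcast : Tendsto (fun n : ℕ => ((k+n:ℕ):ℝ)) atTop atTop :=
    tendsto_natCast_atTop_atTop.comp hT0
  have hπ : Real.sqrt π ≠ 0 := by positivity
  have hT1 : Tendsto (fun n : ℕ => Stirling.stirlingSeq (2*(k+n))) atTop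
      (nhds (Real.sqrt π)) := by
    apply Stirling.tendsto_stirlingSeq_sqrt_pi.comp
    apply StrictMono.tendsto_atTop
    intro a b h
    show 2*(k + a) < 2*(k + b)
    omega
  have hT2 : Tendsto (fun n : ℕ => Stirling.stirlingSeq (k+n)) atTop
      (nhds (Real.sqrt π)) := Stirling.tendsto_stirlingSeq_sqrt_pi.comp hT0
  have hTr : Tendsto (fun n : ℕ => Stirling.stirlingSeq (2*(k+n)) /
      Stirling.stirlingSeq (k+n)) atTop (nhds 1) := by
    have := hT1.div hT2 hπ
    rwa [div_self hπ] at this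
  have hbR : Tendsto (fun x : ℝ => (x + 1/2)/(x + s)) atTop (nhds 1) := by
    have h2 : Tendsto (fun x : ℝ => x + s) atTop atTop :=
      tendsto_atTop_add_const_right _ s tendsto_id
    have h1 : Tendsto (fun x : ℝ => 1 + (1/2 - s)/(x + s)) atTop (nhds 1) := by
      have h3 := ((tendsto_inv_atTop_zero.comp h2).const_mul (1/2 - s)).const_add 1
      simp only [mul_zero, add_zero] at h3
      convert h3 using 2 with x
      simp only [Function.comp_apply, div_eq_mul_inv]
    apply h1.congr'
    filter_upwards [eventually_gt_atTop (0:ℝ)] with x hx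
    have : x + s ≠ 0 := by positivity
    field_simp
    ring
  have hT3 : Tendsto (fun n : ℕ => ((((k+n:ℕ):ℝ)+1/2)/(((k+n:ℕ):ℝ)+s)) ^ s) atTop
      (nhds 1) := by
    have := (hbR.comp hTcast).rpow_const (p := s) (Or.inl one_ne_zero)
    rw [Real.one_rpow] at this
    exact this
  have hT4 : Tendsto (fun n : ℕ => ((1 + s/((k+n:ℕ):ℝ)) ^ (((k+n:ℕ):ℝ)))⁻¹) atTop
      (nhds (Real.exp s)⁻¹) :=
    ((tendsto_one_add_div_rpow_exp s).comp hTcast).inv₀ (Real.exp_ne_zero s)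
  have hTend : Tendsto E atTop (nhds (Real.sqrt (2*π))) := by
    have h := ((((tendsto_const_nhds :
          Tendsto (fun _ : ℕ => Real.sqrt (2*π)) atTop _).mul hTr).mul
        (tendsto_const_nhds : Tendsto (fun _ : ℕ => Real.exp s) atTop _)).mul hT3).mul hT4
    rw [show Real.sqrt (2*π) * 1 * Real.exp s * 1 * (Real.exp s)⁻¹ = Real.sqrt (2*π) by
      field_simp] at h
    exact h
  have hfinal : gfun q ≤ Real.sqrt (2*π) :=
    ge_of_tendsto hTend (eventually_atTop.2 ⟨1, fun n hn => key n (by omega)⟩)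
  rw [gfun, div_le_iff₀ (by positivity)] at hfinal
  exact hfinal


lemma gauss_moment (q : ℝ) (hq : 1/2 ≤ q) :
    (∫ z, |z| ^ (2*q) * gaussPDF z) = Real.Gamma (q + 1/2) * (2:ℝ) ^ q / Real.sqrt π := by
  have hq0 : 0 < q := by linarith
  have h1 : ∀ z : ℝ, |z| ^ (2*q) * gaussPDF z =
      (Real.sqrt (2*π))⁻¹ * (|z| ^ (2*q) * Real.exp (-(1/2) * |z| ^ (2:ℝ))) := by
    intro z
    rw [gaussPDF, show |z| ^ ((2:ℝ)) = z^2 by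
      rw [show ((2:ℝ)) = ((2:ℕ):ℝ) by norm_num, Real.rpow_natCast, sq_abs],
      show -(1/2) * z^2 = -z^2/2 by ring]
    ring
  simp_rw [h1]
  rw [integral_const_mul,
    integral_comp_abs (f := fun x => x ^ (2*q) * Real.exp (-(1/2) * x ^ (2:ℝ))),
    integral_rpow_mul_exp_neg_mul_rpow (by norm_num : (0:ℝ) < 2)
      (by linarith : (-1:ℝ) < 2*q) (by norm_num : (0:ℝ) < 1/2)]
  have e1 : ((1:ℝ)/2) ^ (-(2*q+1)/2) = (2:ℝ) ^ (q + 1/2) := by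
    rw [one_div, Real.inv_rpow (by norm_num : (0:ℝ) ≤ 2),
      ← Real.rpow_neg (by norm_num : (0:ℝ) ≤ 2)]
    congr 1
    ring
  have e2 : (2*q+1)/2 = q + 1/2 := by ring
  rw [e1, e2]
  have e3 : Real.sqrt (2*π) = Real.sqrt 2 * Real.sqrt π := Real.sqrt_mul (by norm_num) _
  have e4 : (2:ℝ) ^ (q + 1/2) = (2:ℝ) ^ q * Real.sqrt 2 := by
    rw [Real.rpow_add (by norm_num : (0:ℝ) < 2), show (2:ℝ) ^ ((1:ℝ)/2) = Real.sqrt 2 by rw [← Real.sqrt_eq_rpow]]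
  rw [e3, e4]
  have n1 : Real.sqrt 2 ≠ 0 := by positivity
  have n2 : Real.sqrt π ≠ 0 := by positivity
  field_simp


theorem stmt_15 (q : ℝ) (hq : 1 / 2 ≤ q) :
    (∫ z, |z| ^ (2 * q) * gaussPDF z) =
        Real.Gamma (q + 1 / 2) * (2 : ℝ) ^ q / Real.sqrt Real.pi ∧
    Real.Gamma (q + 1 / 2) * (2 : ℝ) ^ q / Real.sqrt Real.pi ≤
      Real.sqrt 2 * (2 * q / Real.exp 1) ^ q := by
  have hq0 : 0 < q := by linarith
  constructor
  · exact gauss_moment q hq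
  · have hb := gamma_bound q hq
    have hΓ : 0 < Real.Gamma (q + 1/2) := Real.Gamma_pos_of_pos (by linarith)
    have e3 : Real.sqrt (2*π) = Real.sqrt 2 * Real.sqrt π := Real.sqrt_mul (by norm_num) _
    have e5 : (2*q/Real.exp 1) ^ q = (2:ℝ) ^ q * q ^ q / Real.exp q := by
      rw [Real.div_rpow (by positivity) (Real.exp_pos 1).le, Real.exp_one_rpow,
        Real.mul_rpow (by norm_num) hq0.le]
    rw [e5]
    have hπ : (0:ℝ) < Real.sqrt π := Real.sqrt_pos.2 Real.pi_pos
    have hexp : (0:ℝ) < Real.exp q := Real.exp_pos q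
    have h2 : Real.Gamma (q + 1/2) * Real.exp q * (2:ℝ)^q ≤
        Real.sqrt 2 * Real.sqrt π * q^q * (2:ℝ)^q := by
      have := mul_le_mul_of_nonneg_right hb
        (Real.rpow_nonneg (by norm_num : (0:ℝ) ≤ 2) q)
      rw [e3] at this
      exact this
    calc Real.Gamma (q + 1/2) * (2:ℝ)^q / Real.sqrt π
        = (Real.Gamma (q + 1/2) * Real.exp q * (2:ℝ)^q) / (Real.sqrt π * Real.exp q) := by
          rw [div_eq_div_iff (by positivity) (by positivity)]
          ring
      _ ≤ (Real.sqrt 2 * Real.sqrt π * q^q * (2:ℝ)^q) / (Real.sqrt π * Real.exp q) := by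
          gcongr
      _ = Real.sqrt 2 * ((2:ℝ)^q * q^q / Real.exp q) := by
          rw [div_eq_iff (by positivity)]
          field_simp
end
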